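/- Let f: C → C be a chain map of a cochain complex over the Novikov ring Λ₀ such that f is the identity modulo the maximal ideal of Λ₀ (i.e., f ≡ id modulo positive-valuation terms) and C is complete with respect to the valuation filtration. Then f is a chain homotopy equivalence; moreover if f² is chain homotopic to f, then f is chain homotopic to the identity. -/

import Mathlib

/-!
Write `u = id + n` where `n` takes values in `I • M`; then `n` raises the `I`-adic filtration
by one step. An element of `ker u` satisfies `x = -n x`, so it lies in every `I ^ k • M` and
vanishes because `M` is separated; surjectivity is the successive-approximation argument
available in any `I`-adically complete module, since `u` is surjective modulo `I`. Hence a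
chain map congruent to the identity is an isomorphism of complexes, and if moreover
`f ≫ f ≃ f`, then `f = (f ≫ f) ≫ f⁻¹ ≃ f ≫ f⁻¹ = 𝟙`.
-/

open CategoryTheory

section AdicFiltration

variable {R M N : Type*} [CommRing R] {I : Ideal R}
  [AddCommGroup M] [Module R M] [AddCommGroup N] [Module R N]

theorem LinearMap.map_pow_smul_top_le_of_forall_mem_smul_top (n : M →ₗ[R] N)
    (hn : ∀ x, n x ∈ I • (⊤ : Submodule R N)) (k : ℕ) :
    (I ^ k • ⊤ : Submodule R M).map n ≤ I ^ (k + 1) • ⊤ := by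
  have hrange : (⊤ : Submodule R M).map n ≤ I • ⊤ := by
    rintro _ ⟨x, -, rfl⟩
    exact hn x
  calc (I ^ k • ⊤ : Submodule R M).map n = I ^ k • (⊤ : Submodule R M).map n :=
        Submodule.map_smul'' _ _ _
    _ ≤ I ^ k • (I • ⊤ : Submodule R N) := Submodule.smul_mono le_rfl hrange
    _ = I ^ (k + 1) • ⊤ := by rw [← Submodule.smul_assoc, Ideal.smul_eq_mul, ← pow_succ]

variable (I)

theorem injective_of_forall_sub_mem_smul_top [IsHausdorff I M] (u : M →ₗ[R] M)
    (hu : ∀ x, u x - x ∈ I • (⊤ : Submodule R M)) : Function.Injective u := by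
  rw [← LinearMap.ker_eq_bot, Submodule.eq_bot_iff]
  intro x hx
  have hfixed : x = -(u - LinearMap.id : M →ₗ[R] M) x := by
    simp [LinearMap.mem_ker.mp hx]
  have hmem : ∀ k : ℕ, x ∈ (I ^ k • ⊤ : Submodule R M) := by
    intro k
    induction k with
    | zero => simp
    | succ k ih =>
      rw [hfixed]
      exact Submodule.neg_mem _
        ((u - LinearMap.id).map_pow_smul_top_le_of_forall_mem_smul_top hu k ⟨x, ih, rfl⟩)
  exact IsHausdorff.haus ‹_› x fun k => SModEq.zero.mpr (hmem k)

theorem surjective_of_forall_sub_mem_smul_top [IsPrecomplete I M] [IsHausdorff I M]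
    (u : M →ₗ[R] M) (hu : ∀ x, u x - x ∈ I • (⊤ : Submodule R M)) :
    Function.Surjective u := by
  refine surjective_of_mkQ_comp_surjective (I := I) fun y => ?_
  obtain ⟨x, rfl⟩ := Submodule.mkQ_surjective _ y
  exact ⟨x, (Submodule.Quotient.eq _).mpr (hu x)⟩

theorem bijective_of_forall_sub_mem_smul_top [IsAdicComplete I M] (u : M →ₗ[R] M)
    (hu : ∀ x, u x - x ∈ I • (⊤ : Submodule R M)) : Function.Bijective u :=
  ⟨injective_of_forall_sub_mem_smul_top I u hu, surjective_of_forall_sub_mem_smul_top I u hu⟩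

end AdicFiltration

theorem HomologicalComplex.isIso_of_forall_sub_mem_smul_top {R : Type*} [CommRing R]
    (I : Ideal R) {ι : Type*} {c : ComplexShape ι} {C : HomologicalComplex (ModuleCat R) c}
    (hC : ∀ i, IsAdicComplete I (C.X i)) (f : C ⟶ C)
    (hf : ∀ i (x : C.X i), f.f i x - x ∈ I • (⊤ : Submodule R (C.X i))) : IsIso f := by
  have (i : ι) : IsIso (f.f i) := by
    have := hC i
    rw [ConcreteCategory.isIso_iff_bijective]
    exact bijective_of_forall_sub_mem_smul_top I (M := C.X i) (f.f i).hom (hf i)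
  exact HomologicalComplex.Hom.isIso_of_components f

noncomputable def Homotopy.ofIsIsoOfCompSelf {V : Type*} [Category V] [Preadditive V] {ι : Type*}
    {c : ComplexShape ι} {C : HomologicalComplex V c} (f : C ⟶ C) [IsIso f]
    (h : Homotopy (f ≫ f) f) : Homotopy f (𝟙 C) :=
  (Homotopy.ofEq (by simp)).trans ((h.compRight (inv f)).trans (Homotopy.ofEq (by simp)))

theorem novikov_congruent_to_identity_is_homotopy_equivalence_general
    {R : Type} [CommRing R] (I : Ideal R)
    (C : CochainComplex (ModuleCat R) ℤ)
    -- each term of `C` is complete (and separated) for the filtration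
    (hcomplete : ∀ i : ℤ, IsAdicComplete I (C.X i))
    (f : C ⟶ C)
    -- `f` is the identity modulo the maximal ideal
    (hf : ∀ (i : ℤ) (x : C.X i), f.f i x - x ∈ I • (⊤ : Submodule R (C.X i))) :
    -- `f` is a chain homotopy equivalence ...
    (∃ g : C ⟶ C,
      Nonempty (Homotopy (f ≫ g) (𝟙 C)) ∧ Nonempty (Homotopy (g ≫ f) (𝟙 C))) ∧
    -- ... and if `f ∘ f` is chain homotopic to `f` then `f` is homotopic to the identity
    (Nonempty (Homotopy (f ≫ f) f) → Nonempty (Homotopy f (𝟙 C))) := by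
  have := HomologicalComplex.isIso_of_forall_sub_mem_smul_top I hcomplete f hf
  exact ⟨⟨inv f, ⟨Homotopy.ofEq (IsIso.hom_inv_id f)⟩, ⟨Homotopy.ofEq (IsIso.inv_hom_id f)⟩⟩,
    fun ⟨h⟩ => ⟨Homotopy.ofIsIsoOfCompSelf f h⟩⟩

theorem novikov_congruent_to_identity_is_homotopy_equivalence
    {R : Type} [CommRing R] (I : Ideal R) [I.IsMaximal]
    (C : CochainComplex (ModuleCat R) ℤ)
    -- each term of `C` is complete (and separated) for the filtration
    (hcomplete : ∀ i : ℤ, IsAdicComplete I (C.X i))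
    (f : C ⟶ C)
    -- `f` is the identity modulo the maximal ideal
    (hf : ∀ (i : ℤ) (x : C.X i), f.f i x - x ∈ I • (⊤ : Submodule R (C.X i))) :
    -- `f` is a chain homotopy equivalence ...
    (∃ g : C ⟶ C,
      Nonempty (Homotopy (f ≫ g) (𝟙 C)) ∧ Nonempty (Homotopy (g ≫ f) (𝟙 C))) ∧
    -- ... and if `f ∘ f` is chain homotopic to `f` then `f` is homotopic to the identity
    (Nonempty (Homotopy (f ≫ f) f) → Nonempty (Homotopy f (𝟙 C))) :=
  novikov_congruent_to_identity_is_homotopy_equivalence_general I C hcomplete f hf
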